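/- arXiv:2105.04923 — 2 statements merged into one kernel-verified Lean document; each statement's English description precedes it below -/
import Mathlib

section
/- For the complete graph K_N with coupling γ > 0, the solution x(t) = exp(γ t A) x₀ satisfies x(t) = e^{-γ t}·x₀ + ((e^{γ(N-1)t} − e^{-γ t})/N)·(Σ_j x₀_j)·𝟙, and if Σ_j x₀_j ≠ 0 then for every pair i, j, the ratio x_i(t)/x_j(t) → 1 as t → ∞ (full synchronization). -/
/-!
On `𝟙` the adjacency matrix `A` of `K_N` acts as multiplication by `N - 1`, and on vectors of
sum zero as multiplication by `-1`. Splitting `x₀` into its mean part and a part of sum zero gives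
the closed form of `exp (γ t A) x₀`. Multiplied by `e^{-γ(N-1)t}`, every coordinate tends to the
mean `(∑ⱼ x₀ⱼ) / N`, because the sum-zero part decays relative to it like `e^{-γNt}`; so when
the mean is nonzero all ratios of coordinates tend to `1`.
-/

open NormedSpace Filter Topology Matrix

theorem Matrix.exp_mulVec_of_mulVec_eq_smul {𝕂 ι : Type*} [RCLike 𝕂] [Fintype ι] [DecidableEq ι]
    {M : Matrix ι ι 𝕂} {v : ι → 𝕂} {μ : 𝕂} (h : M *ᵥ v = μ • v) :
    exp M *ᵥ v = exp μ • v := by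
  let : SeminormedRing (Matrix ι ι 𝕂) := Matrix.linftyOpSemiNormedRing
  let : NormedRing (Matrix ι ι 𝕂) := Matrix.linftyOpNormedRing
  let : NormedAlgebra 𝕂 (Matrix ι ι 𝕂) := Matrix.linftyOpNormedAlgebra
  -- completeness for the uniformity of this norm, which is not syntactically the default one
  have : @CompleteSpace (Matrix ι ι 𝕂) PseudoMetricSpace.toUniformSpace :=
    FiniteDimensional.complete 𝕂 _
  have hpow (n : ℕ) : M ^ n *ᵥ v = μ ^ n • v := by
    induction n with
    | zero => simp
    | succ n ih => rw [pow_succ', ← mulVec_mulVec, ih, mulVec_smul, h, smul_smul, pow_succ]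
  have hM := (exp_series_hasSum_exp' (𝕂 := 𝕂) M).map (mulVec.addMonoidHomLeft v)
    (continuous_id.matrix_mulVec continuous_const)
  refine hM.unique ?_
  convert (exp_series_hasSum_exp' (𝕂 := 𝕂) μ).smul_const v using 2 with n
  simp [mulVec.addMonoidHomLeft, smul_mulVec, hpow, smul_smul]

namespace SimpleGraph

variable {V R : Type*} [Fintype V] [DecidableEq V]

theorem adjMatrix_completeGraph_mulVec_apply [Ring R] (w : V → R) (v : V) :
    ((completeGraph V).adjMatrix R *ᵥ w) v = ∑ u, w u - w v := by
  rw [adjMatrix_mulVec_apply, neighborFinset_top, eq_sub_iff_add_eq, ← Finset.sum_singleton w v,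
    Finset.sum_compl_add_sum]

theorem adjMatrix_completeGraph_mulVec_const_one [Ring R] :
    (completeGraph V).adjMatrix R *ᵥ (fun _ => 1) = ((Fintype.card V : R) - 1) • fun _ => 1 := by
  ext v
  rw [adjMatrix_completeGraph_mulVec_apply]
  simp

theorem adjMatrix_completeGraph_mulVec_of_sum_eq_zero [Ring R] {w : V → R} (hw : ∑ u, w u = 0) :
    (completeGraph V).adjMatrix R *ᵥ w = (-1 : R) • w := by
  ext v
  rw [adjMatrix_completeGraph_mulVec_apply, hw]
  simp

theorem exp_smul_adjMatrix_completeGraph_mulVec (c : ℂ) (w : V → ℂ) :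
    exp (c • (completeGraph V).adjMatrix ℂ) *ᵥ w = Complex.exp (-c) • w +
      ((Complex.exp (c * ((Fintype.card V : ℂ) - 1)) - Complex.exp (-c)) / Fintype.card V *
        ∑ u, w u) • fun _ => 1 := by
  rcases isEmpty_or_nonempty V with hV | hV
  · exact Subsingleton.elim _ _
  set n : ℂ := (Fintype.card V : ℂ)
  have hn : n ≠ 0 := by simp [n]
  set m := (∑ u, w u) / n
  set y : V → ℂ := w - m • fun _ => 1
  have hy : ∑ u, y u = 0 := by
    simp only [y, Pi.sub_apply, Pi.smul_apply, smul_eq_mul, mul_one, Finset.sum_sub_distrib,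
      Finset.sum_const, Finset.card_univ, nsmul_eq_mul]
    exact sub_eq_zero.mpr (mul_div_cancel₀ _ hn).symm
  have hconst := exp_mulVec_of_mulVec_eq_smul (M := c • (completeGraph V).adjMatrix ℂ)
    (by rw [smul_mulVec, adjMatrix_completeGraph_mulVec_const_one, smul_smul])
  have hzero := exp_mulVec_of_mulVec_eq_smul (M := c • (completeGraph V).adjMatrix ℂ)
    (by rw [smul_mulVec, adjMatrix_completeGraph_mulVec_of_sum_eq_zero hy, smul_smul, mul_neg_one])
  conv_lhs => rw [show w = y + m • fun _ => 1 by simp [y]]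
  rw [mulVec_add, hzero, mulVec_smul, hconst, ← Complex.exp_eq_exp_ℂ]
  ext v
  simp only [y, m, Pi.add_apply, Pi.sub_apply, Pi.smul_apply, smul_eq_mul, mul_one]
  field_simp
  ring

theorem tendsto_exp_smul_adjMatrix_completeGraph_mulVec_mul_exp_neg {γ : ℝ} (hγ : 0 < γ)
    (w : V → ℂ) (v : V) :
    Tendsto (fun t : ℝ => (exp (((γ : ℂ) * t) • (completeGraph V).adjMatrix ℂ) *ᵥ w) v *
        Complex.exp (-((γ : ℂ) * ((Fintype.card V : ℂ) - 1) * t)))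
      atTop (𝓝 ((∑ u, w u) / Fintype.card V)) := by
  have : Nonempty V := ⟨v⟩
  set n : ℂ := (Fintype.card V : ℂ)
  have hn : n ≠ 0 := Nat.cast_ne_zero.mpr Fintype.card_ne_zero
  set E : ℝ → ℂ := fun t => Complex.exp (-((γ : ℂ) * n * t))
  have hE : Tendsto E atTop (𝓝 0) := by
    have hreal : Tendsto (fun t : ℝ => Real.exp (-(γ * Fintype.card V * t))) atTop (𝓝 0) :=
      Real.tendsto_exp_neg_atTop_nhds_zero.comp
        (tendsto_id.const_mul_atTop (mul_pos hγ (Nat.cast_pos.mpr Fintype.card_pos)))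
    convert (Complex.continuous_ofReal.tendsto 0).comp hreal using 1
    · funext t; simp [E, n]
    · simp
  have hform (t : ℝ) : (exp (((γ : ℂ) * t) • (completeGraph V).adjMatrix ℂ) *ᵥ w) v *
      Complex.exp (-((γ : ℂ) * (n - 1) * t)) = E t * w v + (1 - E t) / n * ∑ u, w u := by
    have hsplit : Complex.exp (-((γ : ℂ) * t)) = Complex.exp (γ * t * (n - 1)) * E t := by
      rw [← Complex.exp_add]; ring_nf
    have hinv : Complex.exp (-((γ : ℂ) * (n - 1) * t)) = (Complex.exp (γ * t * (n - 1)))⁻¹ := by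
      rw [← Complex.exp_neg]; ring_nf
    rw [exp_smul_adjMatrix_completeGraph_mulVec, hsplit, hinv]
    simp only [Pi.add_apply, Pi.smul_apply, smul_eq_mul, mul_one]
    field_simp
    ring
  simp_rw [hform]
  convert (hE.mul_const (w v)).add
    (((tendsto_const_nhds (x := (1 : ℂ))).sub hE).div_const n |>.mul_const (∑ u, w u)) using 2
  ring

end SimpleGraph

theorem stmt_11_general (N : ℕ) (A : Matrix (Fin N) (Fin N) ℂ)
    (hA : ∀ i j : Fin N, A i j = if i = j then 0 else 1)
    (γ : ℝ) (hγ : 0 < γ) (x₀ : Fin N → ℂ)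
    (x : ℝ → Fin N → ℂ)
    (hx : ∀ t : ℝ, x t = (NormedSpace.exp (((γ : ℂ) * t) • A)).mulVec x₀) :
    (∀ t : ℝ, x t =
      Complex.exp (-((γ : ℂ) * t)) • x₀ +
        (((Complex.exp ((γ : ℂ) * ((N : ℂ) - 1) * t) - Complex.exp (-((γ : ℂ) * t))) / N) *
            ∑ j, x₀ j) • (fun _ => (1 : ℂ))) ∧
    ((∑ j, x₀ j) ≠ 0 → ∀ i j : Fin N,
      Filter.Tendsto (fun t : ℝ => x t i / x t j) Filter.atTop (nhds 1)) := by
  obtain rfl : A = (SimpleGraph.completeGraph (Fin N)).adjMatrix ℂ := by ext i j; simp [hA]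
  refine ⟨fun t => ?_, fun hS i j => ?_⟩
  · rw [hx, SimpleGraph.exp_smul_adjMatrix_completeGraph_mulVec, Fintype.card_fin, mul_right_comm]
  · have hlim (k : Fin N) :=
      SimpleGraph.tendsto_exp_smul_adjMatrix_completeGraph_mulVec_mul_exp_neg hγ x₀ k
    simp only [Fintype.card_fin] at hlim
    have hmean : (∑ j, x₀ j) / N ≠ 0 := div_ne_zero hS (Nat.cast_ne_zero.mpr i.pos.ne')
    have hratio := (hlim i).div (hlim j) hmean
    rw [div_self hmean] at hratio
    refine hratio.congr fun t => ?_
    rw [Pi.div_apply, hx, mul_div_mul_right _ _ (Complex.exp_ne_zero _)]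

theorem stmt_11 (N : ℕ) (hN : 2 ≤ N) (A : Matrix (Fin N) (Fin N) ℂ)
    (hA : ∀ i j : Fin N, A i j = if i = j then 0 else 1)
    (γ : ℝ) (hγ : 0 < γ) (x₀ : Fin N → ℂ)
    (x : ℝ → Fin N → ℂ)
    (hx : ∀ t : ℝ, x t = (NormedSpace.exp (((γ : ℂ) * t) • A)).mulVec x₀) :
    (∀ t : ℝ, x t =
      Complex.exp (-((γ : ℂ) * t)) • x₀ +
        (((Complex.exp ((γ : ℂ) * ((N : ℂ) - 1) * t) - Complex.exp (-((γ : ℂ) * t))) / N) *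
            ∑ j, x₀ j) • (fun _ => (1 : ℂ))) ∧
    ((∑ j, x₀ j) ≠ 0 → ∀ i j : Fin N,
      Filter.Tendsto (fun t : ℝ => x t i / x t j) Filter.atTop (nhds 1)) :=
  stmt_11_general N A hA γ hγ x₀ x hx
end

section
/- If A is a real matrix with nonnegative entries and x₀ has all components with positive real part, then every component of exp(t A) x₀ has positive real part for all t ≥ 0; in particular x_j(t) ≠ 0, so the phase arg(x_j(t)) is well-defined and lies in (−π/2, π/2). -/
/-!
The exponential series `exp (t A) = ∑ tⁿ Aⁿ / n!` has entrywise nonnegative terms when `A ≥ 0`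
and `t ≥ 0`, and its `n = 0` term is the identity, so `exp (t A)` is a real matrix with
nonnegative entries and diagonal at least `1`. Hence the real part of
`(exp (t A) x₀)_j = ∑ₖ exp (t A)_{jk} x₀ₖ` is at least `Re x₀ⱼ > 0`, and a complex number with
positive real part is nonzero with argument in `(-π/2, π/2)`.
-/

open NormedSpace Nat

namespace Matrix

variable {ι : Type*} [Fintype ι]

theorem mulVec_apply_pos {α : Type*} [Semiring α] [PartialOrder α] [IsStrictOrderedRing α]
    {M : Matrix ι ι α} {v : ι → α} {j : ι} (hM : ∀ k, 0 ≤ M j k) (hv : ∀ k, 0 ≤ v k)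
    (hMjj : 0 < M j j) (hvj : 0 < v j) : 0 < (M *ᵥ v) j :=
  Finset.sum_pos' (fun k _ => mul_nonneg (hM k) (hv k)) ⟨j, Finset.mem_univ j, mul_pos hMjj hvj⟩

theorem re_map_ofReal_mulVec (M : Matrix ι ι ℝ) (v : ι → ℂ) (j : ι) :
    ((M.map ((↑) : ℝ → ℂ) *ᵥ v) j).re = (M *ᵥ fun k => (v k).re) j := by
  simp [mulVec, dotProduct, Complex.re_sum]

variable [DecidableEq ι]

open scoped Norms.Operator in
theorem hasSum_exp_apply {𝕂 : Type*} [RCLike 𝕂] (M : Matrix ι ι 𝕂) (i j : ι) :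
    HasSum (fun n : ℕ => (n !⁻¹ : 𝕂) * (M ^ n) i j) (exp M i j) :=
  Pi.hasSum.mp (Pi.hasSum.mp (exp_series_hasSum_exp' (𝕂 := 𝕂) M) i) j

theorem exp_map_ofReal (M : Matrix ι ι ℝ) :
    exp (M.map ((↑) : ℝ → ℂ)) = (exp M).map (↑) := by
  ext i j
  refine (hasSum_exp_apply _ i j).unique ?_
  have hpow (n : ℕ) : M.map ((↑) : ℝ → ℂ) ^ n = (M ^ n).map (↑) :=
    (M.map_pow Complex.ofRealHom n).symm
  simpa [hpow] using Complex.hasSum_ofReal.mpr (hasSum_exp_apply M i j)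

theorem exp_apply_nonneg {M : Matrix ι ι ℝ} (hM : ∀ i j, 0 ≤ M i j) (i j : ι) :
    0 ≤ exp M i j :=
  (hasSum_exp_apply M i j).nonneg fun n => mul_nonneg (by positivity) (pow_apply_nonneg hM n i j)

theorem one_le_exp_apply_self {M : Matrix ι ι ℝ} (hM : ∀ i j, 0 ≤ M i j) (i : ι) :
    1 ≤ exp M i i := by
  simpa using le_hasSum (hasSum_exp_apply M i i) 0
    fun n _ => mul_nonneg (by positivity) (pow_apply_nonneg hM n i i)

end Matrix

theorem stmt_19 (N : ℕ) (A : Matrix (Fin N) (Fin N) ℝ) (hA : ∀ i j, 0 ≤ A i j)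
    (x₀ : Fin N → ℂ) (hx₀ : ∀ j, 0 < (x₀ j).re) (t : ℝ) (ht : 0 ≤ t) (j : Fin N) :
    0 < ((NormedSpace.exp (t • A.map (Complex.ofReal : ℝ → ℂ))).mulVec x₀ j).re ∧
    (NormedSpace.exp (t • A.map (Complex.ofReal : ℝ → ℂ))).mulVec x₀ j ≠ 0 ∧
    Complex.arg ((NormedSpace.exp (t • A.map (Complex.ofReal : ℝ → ℂ))).mulVec x₀ j) ∈
      Set.Ioo (-(Real.pi / 2)) (Real.pi / 2) := by
  have htA : ∀ i k, 0 ≤ (t • A) i k := fun i k => mul_nonneg ht (hA i k)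
  have hmap : t • A.map ((↑) : ℝ → ℂ) = (t • A).map (↑) :=
    (A.map_smul _ t fun a => Complex.ofReal_mul t a).symm
  have hre : 0 < ((exp (t • A.map ((↑) : ℝ → ℂ))).mulVec x₀ j).re := by
    rw [hmap, Matrix.exp_map_ofReal, Matrix.re_map_ofReal_mulVec]
    exact Matrix.mulVec_apply_pos (Matrix.exp_apply_nonneg htA j) (fun k => (hx₀ k).le)
      (one_pos.trans_le (Matrix.one_le_exp_apply_self htA j)) (hx₀ j)
  exact ⟨hre, Complex.ne_zero_of_re_pos hre,
    abs_lt.mp (Complex.abs_arg_lt_pi_div_two_iff.mpr (Or.inl hre))⟩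
end
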